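/- arXiv:1606.03388 — 2 statements merged into one kernel-verified Lean document; each statement's English description precedes it below -/
import Mathlib

section
/- Let (f_n) be a sequence of functions on a metric space, uniformly bounded, and define f*(x) = limsup_{y→x, n→∞} f_n(y) and f_*(x) = liminf_{y→x, n→∞} f_n(y). Then f* is upper semicontinuous, f_* is lower semicontinuous, and f_* ≤ f*. Moreover, if f* = f_* =: f, then f_n converges to f locally uniformly. -/
open Filter Topology

/-- Upper relaxed semilimit `f*(x) = limsup_{y→x, n→∞} f_n(y)`. -/
noncomputable def relaxedLimsup {X : Type*} [MetricSpace X] (f : ℕ → X → ℝ) (x : X) : ℝ :=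
  ⨅ p : ℕ × {δ : ℝ // 0 < δ},
    sSup {v : ℝ | ∃ n ≥ p.1, ∃ y : X, dist y x < p.2.1 ∧ v = f n y}

/-- Lower relaxed semilimit `f_*(x) = liminf_{y→x, n→∞} f_n(y)`. -/
noncomputable def relaxedLiminf {X : Type*} [MetricSpace X] (f : ℕ → X → ℝ) (x : X) : ℝ :=
  ⨆ p : ℕ × {δ : ℝ // 0 < δ},
    sInf {v : ℝ | ∃ n ≥ p.1, ∃ y : X, dist y x < p.2.1 ∧ v = f n y}

/-- Half-relaxed limits: for a uniformly bounded sequence `fₙ`, the upper relaxed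
semilimit is upper semicontinuous, the lower one is lower semicontinuous, `f_* ≤ f*`,
and if they coincide then `fₙ` converges locally uniformly to the common value. -/
theorem stmt10 {X : Type*} [MetricSpace X] (f : ℕ → X → ℝ)
    (hbound : ∃ M : ℝ, ∀ n x, |f n x| ≤ M) :
    UpperSemicontinuous (relaxedLimsup f) ∧
    LowerSemicontinuous (relaxedLiminf f) ∧
    (∀ x, relaxedLiminf f x ≤ relaxedLimsup f x) ∧
    (relaxedLimsup f = relaxedLiminf f →
      TendstoLocallyUniformly f (relaxedLimsup f) atTop) := by
  obtain ⟨M, hM⟩ := hbound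
  haveI : Nonempty {δ : ℝ // 0 < δ} := ⟨⟨1, one_pos⟩⟩
  set S : X → ℕ × {δ : ℝ // 0 < δ} → Set ℝ := fun x p =>
    {v : ℝ | ∃ n ≥ p.1, ∃ y : X, dist y x < p.2.1 ∧ v = f n y} with hSdef
  have hmem : ∀ (x : X) (p : ℕ × {δ : ℝ // 0 < δ}) (n : ℕ), p.1 ≤ n → f n x ∈ S x p := by
    intro x p n hn
    exact ⟨n, hn, x, by simpa using p.2.2, rfl⟩
  have hne : ∀ x p, (S x p).Nonempty := fun x p => ⟨f p.1 x, hmem x p p.1 le_rfl⟩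
  have hbddA : ∀ x p, BddAbove (S x p) := by
    intro x p
    refine ⟨M, ?_⟩
    rintro v ⟨n, -, y, -, rfl⟩
    exact (abs_le.1 (hM n y)).2
  have hbddB : ∀ x p, BddBelow (S x p) := by
    intro x p
    refine ⟨-M, ?_⟩
    rintro v ⟨n, -, y, -, rfl⟩
    exact (abs_le.1 (hM n y)).1
  have hrangeB : ∀ x : X, BddBelow (Set.range fun p => sSup (S x p)) := by
    intro x
    refine ⟨-M, ?_⟩
    rintro _ ⟨p, rfl⟩
    exact le_trans (abs_le.1 (hM p.1 x)).1 (le_csSup (hbddA x p) (hmem x p p.1 le_rfl))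
  have hrangeA : ∀ x : X, BddAbove (Set.range fun p => sInf (S x p)) := by
    intro x
    refine ⟨M, ?_⟩
    rintro _ ⟨p, rfl⟩
    exact le_trans (csInf_le (hbddB x p) (hmem x p p.1 le_rfl)) (abs_le.1 (hM p.1 x)).2
  have hLS : ∀ x, relaxedLimsup f x = ⨅ p, sSup (S x p) := fun _ => rfl
  have hLI : ∀ x, relaxedLiminf f x = ⨆ p, sInf (S x p) := fun _ => rfl
  have hsub : ∀ (x y : X) (p q : ℕ × {δ : ℝ // 0 < δ}), p.1 ≤ q.1 →
      dist y x + q.2.1 ≤ p.2.1 → S y q ⊆ S x p := by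
    rintro x y p q hN hd v ⟨n, hn, z, hz, rfl⟩
    refine ⟨n, hN.trans hn, z, ?_, rfl⟩
    have := dist_triangle z y x
    linarith
  -- Upper semicontinuity
  have hUSC : UpperSemicontinuous (relaxedLimsup f) := by
    intro x t ht
    rw [hLS] at ht
    obtain ⟨p, hp⟩ := exists_lt_of_ciInf_lt ht
    have hδ2 : (0:ℝ) < p.2.1 / 2 := half_pos p.2.2
    filter_upwards [Metric.ball_mem_nhds x hδ2] with y hy
    rw [Metric.mem_ball] at hy
    rw [hLS]
    calc ⨅ q, sSup (S y q) ≤ sSup (S y (p.1, ⟨p.2.1 / 2, hδ2⟩)) := ciInf_le (hrangeB y) _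
      _ ≤ sSup (S x p) :=
          csSup_le_csSup (hbddA x p) (hne y _) (hsub x y p _ le_rfl (by simp; linarith))
      _ < t := hp
  -- Lower semicontinuity
  have hLSC : LowerSemicontinuous (relaxedLiminf f) := by
    intro x t ht
    rw [hLI] at ht
    obtain ⟨p, hp⟩ := exists_lt_of_lt_ciSup ht
    have hδ2 : (0:ℝ) < p.2.1 / 2 := half_pos p.2.2
    filter_upwards [Metric.ball_mem_nhds x hδ2] with y hy
    rw [Metric.mem_ball] at hy
    rw [hLI]
    calc t < sInf (S x p) := hp
      _ ≤ sInf (S y (p.1, ⟨p.2.1 / 2, hδ2⟩)) :=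
          csInf_le_csInf (hbddB x p) (hne y _) (hsub x y p _ le_rfl (by simp; linarith))
      _ ≤ ⨆ q, sInf (S y q) := le_ciSup (hrangeA y) _
  -- liminf ≤ limsup
  have hle : ∀ x, relaxedLiminf f x ≤ relaxedLimsup f x := by
    intro x
    rw [hLS, hLI]
    refine ciSup_le fun q => le_ciInf fun p => ?_
    have h1 : sInf (S x q) ≤ f (max p.1 q.1) x :=
      csInf_le (hbddB x q) (hmem x q _ (le_max_right _ _))
    have h2 : f (max p.1 q.1) x ≤ sSup (S x p) :=
      le_csSup (hbddA x p) (hmem x p _ (le_max_left _ _))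
    exact h1.trans h2
  refine ⟨hUSC, hLSC, hle, fun heq => ?_⟩
  -- locally uniform convergence
  rw [Metric.tendstoLocallyUniformly_iff]
  intro ε hε x
  have hε2 : (0:ℝ) < ε / 2 := half_pos hε
  -- choose p with sSup close to the limit value
  have h1 : (⨅ p, sSup (S x p)) < relaxedLimsup f x + ε / 2 := by
    rw [← hLS]; linarith
  obtain ⟨p, hp⟩ := exists_lt_of_ciInf_lt h1
  -- choose q with sInf close to the limit value
  have h2 : relaxedLimsup f x - ε / 2 < ⨆ p, sInf (S x p) := by
    rw [← hLI, ← heq]; linarith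
  obtain ⟨q, hq⟩ := exists_lt_of_lt_ciSup h2
  -- continuity at x
  have hev1 : ∀ᶠ y in 𝓝 x, relaxedLimsup f y < relaxedLimsup f x + ε / 2 :=
    hUSC x _ (by linarith)
  have hev2 : ∀ᶠ y in 𝓝 x, relaxedLimsup f x - ε / 2 < relaxedLimsup f y := by
    have := hLSC x (relaxedLimsup f x - ε / 2) (by rw [← heq]; linarith)
    filter_upwards [this] with y hy
    rw [← heq] at hy
    exact hy
  have hδ : (0:ℝ) < min p.2.1 q.2.1 := lt_min p.2.2 q.2.2
  refine ⟨Metric.ball x (min p.2.1 q.2.1) ∩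
    {y | relaxedLimsup f y < relaxedLimsup f x + ε / 2 ∧
         relaxedLimsup f x - ε / 2 < relaxedLimsup f y}, ?_, ?_⟩
  · exact inter_mem (Metric.ball_mem_nhds x hδ) (hev1.and hev2)
  · filter_upwards [eventually_ge_atTop (max p.1 q.1)] with n hn
    rintro y ⟨hyb, hy1, hy2⟩
    rw [Metric.mem_ball] at hyb
    have hmemp : f n y ∈ S x p :=
      ⟨n, le_trans (le_max_left _ _) hn, y, lt_of_lt_of_le hyb (min_le_left _ _), rfl⟩
    have hmemq : f n y ∈ S x q :=
      ⟨n, le_trans (le_max_right _ _) hn, y, lt_of_lt_of_le hyb (min_le_right _ _), rfl⟩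
    have hub : f n y ≤ sSup (S x p) := le_csSup (hbddA x p) hmemp
    have hlb : sInf (S x q) ≤ f n y := csInf_le (hbddB x q) hmemq
    rw [Real.dist_eq, abs_sub_lt_iff]
    constructor <;> linarith
end

section
/- Suppose f* is upper semicontinuous on a locally compact metric space, φ is continuous, and x₀ is a strict local maximum of f* − φ, where f*(x) = limsup_{y→x, n→∞} f_n(y) for a uniformly bounded sequence (f_n). Then there exist a subsequence n_k → ∞ and points x_k → x₀ such that x_k is a local maximum of f_{n_k} − φ and f_{n_k}(x_k) → f*(x₀). -/
/-!
Maximize `f_k − φ` over a compact closed ball `B` around `x₀`, at `z_k`. Along a sequence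
`(n_j, y_j) → (∞, x₀)` realizing `f*(x₀)`, maximality gives
`f*(x₀) − φ(x₀) ≤ lim (f_{n_j}(z_{n_j}) − φ(z_{n_j})) ≤ f*(x̄) − φ(x̄)` for any limit point `x̄` of
the `z_{n_j}`, so strictness forces `x̄ = x₀` and the values converge to `f*(x₀)`. Eventually
`z_{n_j}` lies in the interior of `B`, where a maximum on `B` is a local maximum.
-/

open Filter Topology

/-- Upper relaxed semilimit `f*(x) = limsup_{y→x, n→∞} f_n(y)`. -/
noncomputable def relaxedLimsup' {X : Type*} [MetricSpace X] (f : ℕ → X → ℝ) (x : X) : ℝ :=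
  ⨅ p : ℕ × {δ : ℝ // 0 < δ},
    sSup {v : ℝ | ∃ n ≥ p.1, ∃ y : X, dist y x < p.2.1 ∧ v = f n y}

section RelaxedLimsup

variable {X : Type*} [MetricSpace X] {f : ℕ → X → ℝ} {M : ℝ}

def valuesNear (f : ℕ → X → ℝ) (x : X) (N : ℕ) (δ : ℝ) : Set ℝ :=
  {v : ℝ | ∃ n ≥ N, ∃ y : X, dist y x < δ ∧ v = f n y}

theorem bddAbove_valuesNear (hM : ∀ n x, f n x ≤ M) (x : X) (N : ℕ) (δ : ℝ) :
    BddAbove (valuesNear f x N δ) :=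
  ⟨M, by rintro v ⟨n, -, y, -, rfl⟩; exact hM n y⟩

theorem apply_mem_valuesNear (f : ℕ → X → ℝ) (x : X) (N : ℕ) {δ : ℝ} (hδ : 0 < δ) :
    f N x ∈ valuesNear f x N δ :=
  ⟨N, le_rfl, x, by rwa [dist_self], rfl⟩

theorem le_relaxedLimsup'_of_tendsto {ι : Type*} {l : Filter ι} [l.NeBot]
    (hM : ∀ n x, f n x ≤ M) {m : ι → ℕ} (hm : Tendsto m l atTop)
    {z : ι → X} {x : X} (hz : Tendsto z l (𝓝 x)) {c : ℝ}
    (hc : Tendsto (fun i => f (m i) (z i)) l (𝓝 c)) :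
    c ≤ relaxedLimsup' f x := by
  refine le_ciInf fun ⟨N, δ, hδ⟩ => le_of_tendsto hc ?_
  filter_upwards [hm.eventually_ge_atTop N, hz (Metric.ball_mem_nhds x hδ)] with i hN hδi
  exact le_csSup (bddAbove_valuesNear hM x N δ) ⟨m i, hN, z i, hδi, rfl⟩

theorem exists_lt_apply_of_lt_relaxedLimsup' (hM : ∀ n x, |f n x| ≤ M) {x : X} {c : ℝ}
    (hc : c < relaxedLimsup' f x) (N : ℕ) {δ : ℝ} (hδ : 0 < δ) :
    ∃ n ≥ N, ∃ y, dist y x < δ ∧ c < f n y := by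
  have hbdd := bddAbove_valuesNear (fun n x => (abs_le.1 (hM n x)).2) x
  have hbelow : BddBelow (Set.range fun p : ℕ × {δ : ℝ // 0 < δ} =>
      sSup (valuesNear f x p.1 p.2.1)) := by
    refine ⟨-M, ?_⟩
    rintro _ ⟨⟨N, δ, hδ⟩, rfl⟩
    exact (neg_le_of_abs_le (hM N x)).trans
      (le_csSup (hbdd N δ) (apply_mem_valuesNear f x N hδ))
  have hlt : c < sSup (valuesNear f x N δ) :=
    hc.trans_le (ciInf_le hbelow (N, ⟨δ, hδ⟩))
  obtain ⟨_, ⟨n, hn, y, hy, rfl⟩, hcy⟩ :=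
    exists_lt_of_lt_csSup ⟨_, apply_mem_valuesNear f x N hδ⟩ hlt
  exact ⟨n, hn, y, hy, hcy⟩

theorem exists_seq_tendsto_relaxedLimsup' (hM : ∀ n x, |f n x| ≤ M) (x : X) :
    ∃ n : ℕ → ℕ, StrictMono n ∧ ∃ y : ℕ → X, Tendsto y atTop (𝓝 x) ∧
      Tendsto (fun j => f (n j) (y j)) atTop (𝓝 (relaxedLimsup' f x)) := by
  have hε : Tendsto (fun j : ℕ => 1 / ((j : ℝ) + 1)) atTop (𝓝 0) :=
    tendsto_one_div_add_atTop_nhds_zero_nat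
  have hεpos : ∀ j : ℕ, 0 < 1 / ((j : ℝ) + 1) := fun j => Nat.one_div_pos_of_nat
  choose n hn y hy hfy using fun j =>
    exists_lt_apply_of_lt_relaxedLimsup' hM (sub_lt_self _ (hεpos j)) j (hεpos j)
  have hyx : Tendsto y atTop (𝓝 x) := tendsto_iff_dist_tendsto_zero.2 <|
    squeeze_zero (fun _ => dist_nonneg) (fun j => (hy j).le) hε
  obtain ⟨τ, hτ, hnτ⟩ := strictMono_subseq_of_tendsto_atTop (tendsto_atTop_mono hn tendsto_id)
  obtain ⟨ℓ, -, σ, hσ, hℓ⟩ :=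
    isCompact_Icc.tendsto_subseq fun j => abs_le.1 (hM (n (τ j)) (y (τ j)))
  have hψ : StrictMono (τ ∘ σ) := hτ.comp hσ
  have hyψ : Tendsto (y ∘ τ ∘ σ) atTop (𝓝 x) := hyx.comp hψ.tendsto_atTop
  have hℓ_le : ℓ ≤ relaxedLimsup' f x :=
    le_relaxedLimsup'_of_tendsto (fun n x => (abs_le.1 (hM n x)).2)
      (hnτ.comp hσ).tendsto_atTop hyψ hℓ
  have hle_ℓ : relaxedLimsup' f x ≤ ℓ := by
    refine le_of_tendsto_of_tendsto' ?_ hℓ fun j => (hfy (τ (σ j))).le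
    simpa using tendsto_const_nhds.sub (hε.comp hψ.tendsto_atTop)
  exact ⟨n ∘ τ ∘ σ, hnτ.comp hσ, y ∘ τ ∘ σ, hyψ, le_antisymm hℓ_le hle_ℓ ▸ hℓ⟩

theorem exists_strictMono_tendsto_of_isMaxOn (hM : ∀ n x, |f n x| ≤ M) {φ : X → ℝ}
    (hφ : Continuous φ) {x₀ : X} {B : Set X} (hBc : IsCompact B) (hB : B ∈ 𝓝 x₀)
    (hstrict : ∀ y ∈ B, y ≠ x₀ →
      relaxedLimsup' f y - φ y < relaxedLimsup' f x₀ - φ x₀)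
    {z : ℕ → X} (hzB : ∀ k, z k ∈ B) (hz : ∀ k, IsMaxOn (fun y => f k y - φ y) B (z k)) :
    ∃ m : ℕ → ℕ, StrictMono m ∧ Tendsto (z ∘ m) atTop (𝓝 x₀) ∧
      Tendsto (fun j => f (m j) (z (m j))) atTop (𝓝 (relaxedLimsup' f x₀)) := by
  obtain ⟨n, hn, y, hy, hfy⟩ := exists_seq_tendsto_relaxedLimsup' hM x₀
  obtain ⟨⟨x', ℓ⟩, ⟨hx'B, -⟩, σ, hσ, hlim⟩ :=
    (hBc.prod (isCompact_Icc (a := -M) (b := M))).tendsto_subseq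
      (x := fun j => (z (n j), f (n j) (z (n j)))) fun j => ⟨hzB (n j), abs_le.1 (hM _ _)⟩
  have hzx' : Tendsto (z ∘ n ∘ σ) atTop (𝓝 x') := hlim.fst_nhds
  have hfℓ : Tendsto (fun j => f (n (σ j)) (z (n (σ j)))) atTop (𝓝 ℓ) := hlim.snd_nhds
  have hℓ_le : ℓ ≤ relaxedLimsup' f x' :=
    le_relaxedLimsup'_of_tendsto (fun n x => (abs_le.1 (hM n x)).2)
      (hn.comp hσ).tendsto_atTop hzx' hfℓ
  have hyσ : Tendsto (y ∘ σ) atTop (𝓝 x₀) := hy.comp hσ.tendsto_atTop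
  have hmax : relaxedLimsup' f x₀ - φ x₀ ≤ ℓ - φ x' := by
    refine le_of_tendsto_of_tendsto ((hfy.comp hσ.tendsto_atTop).sub ((hφ.tendsto x₀).comp hyσ))
      (hfℓ.sub ((hφ.tendsto x').comp hzx')) ?_
    filter_upwards [hyσ hB] with j hj
    exact hz (n (σ j)) hj
  obtain rfl : x' = x₀ := by
    by_contra hne
    linarith [hstrict x' hx'B hne]
  obtain rfl : ℓ = relaxedLimsup' f x' := le_antisymm hℓ_le (by linarith)
  exact ⟨n ∘ σ, hn.comp hσ, hzx', hfℓ⟩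

end RelaxedLimsup

/-- Extraction of converging maximum points: a strict local maximum of `f* − φ` is the
limit of local maximum points of `f_{n_k} − φ` along a subsequence, with convergence of
the values. -/
theorem stmt11 {X : Type*} [MetricSpace X] [LocallyCompactSpace X]
    (f : ℕ → X → ℝ) (hbound : ∃ M : ℝ, ∀ n x, |f n x| ≤ M)
    (husc : ∀ n, UpperSemicontinuous (f n))
    (φ : X → ℝ) (hφ : Continuous φ) (x₀ : X)
    (hstrict : ∃ r > (0:ℝ), ∀ y ∈ Metric.ball x₀ r, y ≠ x₀ →
      relaxedLimsup' f y - φ y < relaxedLimsup' f x₀ - φ x₀) :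
    ∃ nk : ℕ → ℕ, StrictMono nk ∧ ∃ xk : ℕ → X,
      Tendsto xk atTop (nhds x₀) ∧
      (∀ k, IsLocalMax (fun y => f (nk k) y - φ y) (xk k)) ∧
      Tendsto (fun k => f (nk k) (xk k)) atTop (nhds (relaxedLimsup' f x₀)) := by
  obtain ⟨M, hM⟩ := hbound
  obtain ⟨r, hr, hstrict⟩ := hstrict
  obtain ⟨ρ, hBc, hρ, hρr⟩ := ((eventually_nhdsWithin_of_eventually_nhds
    (Metric.eventually_isCompact_closedBall x₀)).and (Ioo_mem_nhdsGT hr)).exists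
  set B := Metric.closedBall x₀ ρ
  choose z hzB hz using fun k =>
    ((husc k).add hφ.neg.upperSemicontinuous).upperSemicontinuousOn B |>.exists_isMaxOn
      ⟨x₀, Metric.mem_closedBall_self hρ.le⟩ hBc
  obtain ⟨m, hm, hzm, hfm⟩ := exists_strictMono_tendsto_of_isMaxOn hM hφ hBc
    (Metric.closedBall_mem_nhds x₀ hρ)
    (fun y hy => hstrict y (Metric.closedBall_subset_ball hρr hy)) hzB hz
  obtain ⟨ψ, hψ, hψball⟩ :=
    extraction_of_eventually_atTop (hzm.eventually (Metric.ball_mem_nhds x₀ hρ))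
  refine ⟨m ∘ ψ, hm.comp hψ, z ∘ m ∘ ψ, hzm.comp hψ.tendsto_atTop, fun k => ?_,
    hfm.comp hψ.tendsto_atTop⟩
  exact (hz _).isLocalMax <| mem_of_superset (Metric.isOpen_ball.mem_nhds (hψball k))
    Metric.ball_subset_closedBall
end
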